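/- (Inequality for subdifferential trajectories.) Let Π be proper convex lsc on ℝ^m with Int(D(∂Π)) ≠ ∅ and fix a ∈ Int(D(∂Π)). Then there exist constants λ₁ > 0 and λ₂, λ₃ ≥ 0 such that for every continuous x : [0,T] → cl(D(∂Π)) and every k of bounded variation with k(0)=0 satisfying ⟨x(t) − α, dk(t) − β dt⟩ ≥ 0 for all (α, β) with β ∈ ∂Π(α), one has ∫_s^t ⟨x(r) − a, dk(r)⟩ ≥ λ₁·(variation of k on [s,t]) − λ₂ ∫_s^t |x(r) − a| dr − λ₃ (t − s) for all 0 ≤ s ≤ t ≤ T. -/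

import Mathlib

/-!
Since `a` is an interior point of `D(∂Π)`, some closed ball `B̄(a, ρ)` lies in `D(∂Π)`, and the
convex function `Π` is continuous, hence bounded near that ball, so every subgradient `β` at a point
of `B̄(a, ρ)` has `‖β‖ ≤ M`. Testing the monotonicity condition at time `r` against
`α = a + ρ U(r)/‖U(r)‖` gives the pointwise bound
`ρ ‖U(r)‖ - M ‖x(r) - a‖ - ρ M ≤ ⟪x(r) - a, U(r)⟫`, which integrates to the claim.
-/

open MeasureTheory Set
open scoped RealInnerProductSpace

/-- The convex subdifferential of a real-valued function on `ℝ^m`. -/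
def subdiff {m : ℕ} (f : EuclideanSpace ℝ (Fin m) → ℝ) (x : EuclideanSpace ℝ (Fin m)) :
    Set (EuclideanSpace ℝ (Fin m)) :=
  {u | ∀ v, ⟪u, v - x⟫ + f x ≤ f v}

open Metric

section InnerProductSpace

variable {E : Type*} [NormedAddCommGroup E] [InnerProductSpace ℝ E]

theorem exists_norm_le_inner_eq (u : E) {ρ : ℝ} (hρ : 0 ≤ ρ) :
    ∃ v : E, ‖v‖ ≤ ρ ∧ ⟪v, u⟫ = ρ * ‖u‖ := by
  rcases eq_or_ne u 0 with rfl | hu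
  · exact ⟨0, by simpa using hρ, by simp⟩
  refine ⟨(ρ / ‖u‖) • u, ?_, ?_⟩
  · rw [norm_smul, Real.norm_of_nonneg (by positivity), div_mul_cancel₀ _ (norm_ne_zero_iff.2 hu)]
  · rw [real_inner_smul_left, real_inner_self_eq_norm_sq]
    field_simp

theorem le_inner_of_forall_mem_closedBall {a y u : E} {ρ M : ℝ} (hρ : 0 ≤ ρ)
    (h : ∀ α ∈ closedBall a ρ, ∃ β, ‖β‖ ≤ M ∧ 0 ≤ ⟪y - α, u - β⟫) :
    ρ * ‖u‖ - M * ‖y - a‖ - ρ * M ≤ ⟪y - a, u⟫ := by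
  obtain ⟨v, hv, hvu⟩ := exists_norm_le_inner_eq u hρ
  obtain ⟨β, hβ, hmono⟩ := h (a + v) (by simpa using hv)
  have hyβ : -(‖y - a‖ * M) ≤ ⟪y - a, β⟫ := by
    have := mul_le_mul_of_nonneg_left hβ (norm_nonneg (y - a))
    linarith [neg_le_of_abs_le (abs_real_inner_le_norm (y - a) β)]
  have hvβ : ⟪v, β⟫ ≤ ρ * M :=
    (real_inner_le_norm v β).trans (mul_le_mul hv hβ (norm_nonneg β) hρ)
  have hexpand : ⟪y - (a + v), u - β⟫ = ⟪y - a, u⟫ - ⟪y - a, β⟫ - ⟪v, u⟫ + ⟪v, β⟫ := by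
    rw [← sub_sub, inner_sub_left, inner_sub_right, inner_sub_right]
    ring
  linarith

theorem IntervalIntegrable.continuous_inner {x U : ℝ → E} {s t : ℝ} (hx : Continuous x)
    (hU : IntervalIntegrable U volume s t) :
    IntervalIntegrable (fun r => ⟪x r, U r⟫) volume s t :=
  (hU.norm.continuousOn_mul hx.norm.continuousOn).mono_fun'
    (hx.aestronglyMeasurable.inner hU.aestronglyMeasurable_restrict_uIoc)
    (Filter.Eventually.of_forall fun _ => norm_inner_le_norm _ _)

theorem sub_sub_le_integral_inner {x U : ℝ → E} {s t c₁ c₂ c₃ : ℝ} (hx : Continuous x)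
    (hU : IntervalIntegrable U volume s t) (hst : s ≤ t)
    (h : ∀ r ∈ Icc s t, c₁ * ‖U r‖ - c₂ * ‖x r‖ - c₃ ≤ ⟪x r, U r⟫) :
    c₁ * (∫ r in s..t, ‖U r‖) - c₂ * (∫ r in s..t, ‖x r‖) - c₃ * (t - s)
      ≤ ∫ r in s..t, ⟪x r, U r⟫ := by
  have hUn := hU.norm.const_mul c₁
  have hxn := (hx.norm.intervalIntegrable (μ := volume) s t).const_mul c₂
  calc c₁ * (∫ r in s..t, ‖U r‖) - c₂ * (∫ r in s..t, ‖x r‖) - c₃ * (t - s)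
      = ∫ r in s..t, (c₁ * ‖U r‖ - c₂ * ‖x r‖ - c₃) := by
        rw [intervalIntegral.integral_sub (hUn.sub hxn) intervalIntegrable_const,
          intervalIntegral.integral_sub hUn hxn, intervalIntegral.integral_const_mul,
          intervalIntegral.integral_const_mul, intervalIntegral.integral_const, smul_eq_mul,
          mul_comm c₃]
    _ ≤ ∫ r in s..t, ⟪x r, U r⟫ :=
        intervalIntegral.integral_mono_on hst ((hUn.sub hxn).sub intervalIntegrable_const)
          (hU.continuous_inner hx) h

end InnerProductSpace

section Subdifferential

variable {m : ℕ} {f : EuclideanSpace ℝ (Fin m) → ℝ}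

theorem mul_norm_le_of_mem_subdiff {x u : EuclideanSpace ℝ (Fin m)} {δ C : ℝ} (hδ : 0 ≤ δ)
    (hu : u ∈ subdiff f x) (hC : ∀ y ∈ closedBall x δ, f y - f x ≤ C) : δ * ‖u‖ ≤ C := by
  obtain ⟨v, hv, hvu⟩ := exists_norm_le_inner_eq u hδ
  have := hu (x + v)
  rw [add_sub_cancel_left, real_inner_comm, hvu] at this
  linarith [hC (x + v) (by simpa using hv)]

theorem Continuous.exists_subdiff_norm_le_on_closedBall (hf : Continuous f)
    (a : EuclideanSpace ℝ (Fin m)) {ρ : ℝ} (hρ : 0 < ρ) :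
    ∃ M ≥ 0, ∀ α ∈ closedBall a ρ, ∀ β ∈ subdiff f α, ‖β‖ ≤ M := by
  obtain ⟨C, hC⟩ := (isCompact_closedBall a (2 * ρ)).exists_bound_of_continuousOn hf.continuousOn
  have hC₀ : 0 ≤ C := (norm_nonneg _).trans (hC a (mem_closedBall_self (by positivity)))
  refine ⟨2 * C / ρ, by positivity, fun α hα β hβ => ?_⟩
  rw [le_div_iff₀ hρ, mul_comm]
  refine mul_norm_le_of_mem_subdiff hρ.le hβ fun y hy => ?_
  have hy' : y ∈ closedBall a (2 * ρ) := by
    rw [mem_closedBall] at hα hy ⊢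
    linarith [dist_triangle y α a]
  have hα' : α ∈ closedBall a (2 * ρ) := closedBall_subset_closedBall (by linarith) hα
  linarith [abs_le.1 (hC y hy'), abs_le.1 (hC α hα')]

end Subdifferential

theorem stmt15_general {m : ℕ} (Φ : EuclideanSpace ℝ (Fin m) → ℝ)
    (hconv : ConvexOn ℝ Set.univ Φ)
    (a : EuclideanSpace ℝ (Fin m)) (ha : a ∈ interior {x | (subdiff Φ x).Nonempty})
    (T : ℝ) :
    ∃ l₁ > (0 : ℝ), ∃ l₂ ≥ (0 : ℝ), ∃ l₃ ≥ (0 : ℝ),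
      ∀ (x U : ℝ → EuclideanSpace ℝ (Fin m)),
        Continuous x →
        (∀ t ∈ Icc (0 : ℝ) T, x t ∈ closure {y | (subdiff Φ y).Nonempty}) →
        IntervalIntegrable U volume 0 T →
        (∀ α β, β ∈ subdiff Φ α → ∀ t ∈ Icc (0 : ℝ) T, 0 ≤ ⟪x t - α, U t - β⟫) →
        ∀ s t, 0 ≤ s → s ≤ t → t ≤ T →
          l₁ * (∫ r in s..t, ‖U r‖) - l₂ * (∫ r in s..t, ‖x r - a‖) - l₃ * (t - s)
            ≤ ∫ r in s..t, ⟪x r - a, U r⟫ := by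
  have hΦ : Continuous Φ := continuousOn_univ.1 (hconv.continuousOn isOpen_univ)
  obtain ⟨r, hr, hball⟩ := Metric.mem_nhds_iff.1 (mem_interior_iff_mem_nhds.1 ha)
  obtain ⟨M, hM, hbound⟩ := hΦ.exists_subdiff_norm_le_on_closedBall a (half_pos hr)
  refine ⟨r / 2, half_pos hr, M, hM, r / 2 * M, by positivity, ?_⟩
  intro x U hx _ hU hmono s t hs hst htT
  have hsub : uIcc s t ⊆ uIcc 0 T := by
    rw [uIcc_of_le hst, uIcc_of_le (hs.trans (hst.trans htT))]
    exact Icc_subset_Icc hs htT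
  refine sub_sub_le_integral_inner (hx.sub continuous_const) (hU.mono_set hsub) hst
    fun τ hτ => le_inner_of_forall_mem_closedBall (half_pos hr).le fun α hα => ?_
  obtain ⟨β, hβ⟩ := hball (closedBall_subset_ball (half_lt_self hr) hα)
  exact ⟨β, hbound α hα β hβ, hmono α β hβ τ ⟨hs.trans hτ.1, hτ.2.trans htT⟩⟩

/-- Inequality for subdifferential trajectories: `k(t) = ∫_0^t U(r) dr` has density `U`,
its total variation on `[s,t]` is `∫_s^t ‖U(r)‖ dr`, and `dk(t) ∈ ∂Π(x(t)) dt` is expressed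
by `⟨x(t) − α, U(t) − β⟩ ≥ 0` for every `(α, β)` in the graph of `∂Π`. -/
theorem stmt15 {m : ℕ} (Φ : EuclideanSpace ℝ (Fin m) → ℝ)
    (hconv : ConvexOn ℝ Set.univ Φ) (hlsc : LowerSemicontinuous Φ)
    (h0 : Φ 0 = 0) (hpos : ∀ x, 0 ≤ Φ x)
    (hint : (interior {x | (subdiff Φ x).Nonempty}).Nonempty)
    (a : EuclideanSpace ℝ (Fin m)) (ha : a ∈ interior {x | (subdiff Φ x).Nonempty})
    (T : ℝ) (hT : 0 ≤ T) :
    ∃ l₁ > (0 : ℝ), ∃ l₂ ≥ (0 : ℝ), ∃ l₃ ≥ (0 : ℝ),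
      ∀ (x U : ℝ → EuclideanSpace ℝ (Fin m)),
        Continuous x →
        (∀ t ∈ Icc (0 : ℝ) T, x t ∈ closure {y | (subdiff Φ y).Nonempty}) →
        IntervalIntegrable U volume 0 T →
        (∀ α β, β ∈ subdiff Φ α → ∀ t ∈ Icc (0 : ℝ) T, 0 ≤ ⟪x t - α, U t - β⟫) →
        ∀ s t, 0 ≤ s → s ≤ t → t ≤ T →
          l₁ * (∫ r in s..t, ‖U r‖) - l₂ * (∫ r in s..t, ‖x r - a‖) - l₃ * (t - s)
            ≤ ∫ r in s..t, ⟪x r - a, U r⟫ :=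
  stmt15_general Φ hconv a ha T
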